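/- arXiv:0710.3303 — 3 statements merged into one kernel-verified Lean document; each statement's English description precedes it below -/
import Mathlib

section
/- Let K be an algebraically closed field of characteristic different from 2, let a₁, a₂, a₃, b₁, b₂, b₃ ∈ K, let m = [[a₁,b₃,b₂],[b₃,a₂,b₁],[b₂,b₁,a₃]], and set c₁ = a₂a₃ − b₁², c₂ = a₁a₃ − b₂², c₃ = a₁a₂ − b₃². Then the only common zero in K³ of the three partial derivatives of the Ciani form Q_m (equivalently, the plane quartic curve Q_m = 0 is nonsingular) is (0,0,0) if and only if a₁a₂a₃ ≠ 0, c₁c₂c₃ ≠ 0 and det m ≠ 0. -/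
/-!
Since `∂Q_m/∂xᵢ = 4 xᵢ (m x²)ᵢ`, where `x² = (x₁², x₂², x₃²)`, and every vector over an
algebraically closed field is such a square, the curve is singular exactly when some `u ≠ 0`
satisfies `uᵢ (m u)ᵢ = 0` for all `i`. If `S` is the support of such a `u`, then `u|_S` lies in
the kernel of the principal submatrix `m_SS`; conversely a kernel vector of a singular `m_SS`,
extended by zero, is such a `u`. The principal minors of `m` are the `aᵢ`, the `cᵢ` and `det m`.
-/

open MvPolynomial

/-- The Ciani form `Q_m = a₁x⁴ + a₂y⁴ + a₃z⁴ + 2(b₁y²z² + b₂x²z² + b₃x²y²)`. -/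
noncomputable def cianiForm {K : Type*} [CommRing K] (a₁ a₂ a₃ b₁ b₂ b₃ : K) :
    MvPolynomial (Fin 3) K :=
  C a₁ * X 0 ^ 4 + C a₂ * X 1 ^ 4 + C a₃ * X 2 ^ 4 +
    C 2 * (C b₁ * X 1 ^ 2 * X 2 ^ 2 + C b₂ * X 0 ^ 2 * X 2 ^ 2 + C b₃ * X 0 ^ 2 * X 1 ^ 2)

namespace Matrix

variable {n R K : Type*} [Fintype n]

def IsComplementary [CommRing R] (M : Matrix n n R) (u : n → R) : Prop :=
  ∀ i, u i * (M *ᵥ u) i = 0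

section CommRing

variable [CommRing R] {M : Matrix n n R}

theorem isComplementary_of_mulVec_eq_zero {u : n → R} (h : M *ᵥ u = 0) :
    M.IsComplementary u := fun i => by simp [h]

theorem isComplementary_single [DecidableEq n] {i : n} (h : M i i = 0) :
    M.IsComplementary (Pi.single i 1) := by
  intro k
  rcases eq_or_ne k i with rfl | hki
  · simp [mulVec_single, h]
  · simp [hki]

theorem isComplementary_of_minor_eq_zero [DecidableEq n] {i j : n} (hij : i ≠ j)
    (h : M i i * M j j - M i j * M j i = 0) :
    M.IsComplementary (Pi.single j (M i i) - Pi.single i (M i j)) := by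
  intro k
  rcases eq_or_ne k i with rfl | hki
  · simp [mulVec_sub, mulVec_single, hij, mul_comm]
  rcases eq_or_ne k j with rfl | hkj
  · simp [mulVec_sub, mulVec_single, hki, h]
  · simp [hki, hkj]

end CommRing

theorem forall_mul_mulVec_sq_iff [Field K] [IsAlgClosed K] {M : Matrix n n K} :
    (∀ x : n → K, (∀ i, x i * (M *ᵥ x ^ 2) i = 0) → x = 0) ↔
      ∀ u, M.IsComplementary u → u = 0 := by
  constructor
  · intro h u hu
    choose x hx using fun i => IsAlgClosed.exists_pow_nat_eq (u i) two_pos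
    have hxu : x ^ 2 = u := funext hx
    suffices x = 0 by rw [← hxu, this]; simp
    refine h x fun i => ?_
    have := hu i
    rw [← hxu, Pi.pow_apply, pow_two, mul_assoc, mul_eq_zero] at this
    exact this.elim (fun h0 => by simp [h0]) id
  · intro h x hx
    have := h (x ^ 2) fun i => by rw [Pi.pow_apply, pow_two, mul_assoc, hx i, mul_zero]
    funext i
    simpa using congrFun this i

end Matrix

open Matrix

abbrev cianiMatrix {K : Type*} (a₁ a₂ a₃ b₁ b₂ b₃ : K) : Matrix (Fin 3) (Fin 3) K :=
  !![a₁, b₃, b₂; b₃, a₂, b₁; b₂, b₁, a₃]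

theorem eval_pderiv_cianiForm {R : Type*} [CommRing R] (a₁ a₂ a₃ b₁ b₂ b₃ : R)
    (x : Fin 3 → R) (i : Fin 3) :
    eval x (pderiv i (cianiForm a₁ a₂ a₃ b₁ b₂ b₃)) =
      4 * (x i * (cianiMatrix a₁ a₂ a₃ b₁ b₂ b₃ *ᵥ x ^ 2) i) := by
  fin_cases i <;>
    simp [cianiForm, pderiv_X, mulVec, dotProduct, Fin.sum_univ_three] <;>
    ring

section Field

variable {K : Type*} [Field K] {a₁ a₂ a₃ b₁ b₂ b₃ : K}

theorem forall_eval_pderiv_cianiForm_eq_zero_iff (h2 : (2 : K) ≠ 0) (x : Fin 3 → K) :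
    (∀ i, eval x (pderiv i (cianiForm a₁ a₂ a₃ b₁ b₂ b₃)) = 0) ↔
      ∀ i, x i * (cianiMatrix a₁ a₂ a₃ b₁ b₂ b₃ *ᵥ x ^ 2) i = 0 := by
  have h4 : (4 : K) ≠ 0 := by simpa [show (4 : K) = 2 * 2 by norm_num] using mul_ne_zero h2 h2
  simp only [eval_pderiv_cianiForm, mul_eq_zero, h4, false_or]

theorem eq_zero_of_mul_sub_sq_ne_zero {a b c u v : K} (h : a * c - b ^ 2 ≠ 0)
    (h₁ : a * u + b * v = 0) (h₂ : b * u + c * v = 0) : u = 0 ∧ v = 0 := by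
  constructor
  · have : (a * c - b ^ 2) * u = 0 := by linear_combination c * h₁ - b * h₂
    exact (mul_eq_zero.1 this).resolve_left h
  · have : (a * c - b ^ 2) * v = 0 := by linear_combination a * h₂ - b * h₁
    exact (mul_eq_zero.1 this).resolve_left h

theorem eq_zero_of_isComplementary_cianiMatrix (hA : a₁ * a₂ * a₃ ≠ 0)
    (hC : (a₂ * a₃ - b₁ ^ 2) * (a₁ * a₃ - b₂ ^ 2) * (a₁ * a₂ - b₃ ^ 2) ≠ 0)
    (hD : (cianiMatrix a₁ a₂ a₃ b₁ b₂ b₃).det ≠ 0) {u : Fin 3 → K}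
    (hu : (cianiMatrix a₁ a₂ a₃ b₁ b₂ b₃).IsComplementary u) : u = 0 := by
  obtain ⟨⟨ha₁, ha₂⟩, ha₃⟩ := mul_ne_zero_iff.1 hA |>.imp_left mul_ne_zero_iff.1
  obtain ⟨⟨hc₁, hc₂⟩, hc₃⟩ := mul_ne_zero_iff.1 hC |>.imp_left mul_ne_zero_iff.1
  suffices u 0 = 0 ∧ u 1 = 0 ∧ u 2 = 0 by
    obtain ⟨h₀, h₁, h₂⟩ := this
    ext i; fin_cases i <;> assumption
  have h₀ := hu 0
  have h₁ := hu 1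
  have h₂ := hu 2
  simp only [mulVec, dotProduct, of_apply, cons_val', cons_val_fin_one, cons_val_zero,
    Fin.sum_univ_three, cons_val_one, cons_val, mul_eq_zero] at h₀ h₁ h₂
  rcases h₀ with hu₀ | L₀ <;> rcases h₁ with hu₁ | L₁ <;> rcases h₂ with hu₂ | L₂
  · exact ⟨hu₀, hu₁, hu₂⟩
  · simp only [hu₀, hu₁, mul_zero, zero_add, mul_eq_zero, ha₃, false_or] at L₂
    exact ⟨hu₀, hu₁, L₂⟩
  · simp only [hu₀, hu₂, mul_zero, zero_add, add_zero, mul_eq_zero, ha₂, false_or] at L₁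
    exact ⟨hu₀, L₁, hu₂⟩
  · simp only [hu₀, mul_zero, zero_add] at L₁ L₂
    exact ⟨hu₀, eq_zero_of_mul_sub_sq_ne_zero hc₁ L₁ L₂⟩
  · simp only [hu₁, hu₂, mul_zero, add_zero, mul_eq_zero, ha₁, false_or] at L₀
    exact ⟨L₀, hu₁, hu₂⟩
  · simp only [hu₁, mul_zero, add_zero] at L₀ L₂
    obtain ⟨h₀, h₂⟩ := eq_zero_of_mul_sub_sq_ne_zero hc₂ L₀ L₂
    exact ⟨h₀, hu₁, h₂⟩
  · simp only [hu₂, mul_zero, add_zero] at L₀ L₁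
    obtain ⟨h₀, h₁⟩ := eq_zero_of_mul_sub_sq_ne_zero hc₃ L₀ L₁
    exact ⟨h₀, h₁, hu₂⟩
  · have : u = 0 := eq_zero_of_mulVec_eq_zero hD <| by
      ext i; fin_cases i <;> simpa [mulVec, dotProduct, Fin.sum_univ_three]
    simp [this]

theorem cianiMatrix_minors_ne_zero
    (h : ∀ u, (cianiMatrix a₁ a₂ a₃ b₁ b₂ b₃).IsComplementary u → u = 0) :
    a₁ * a₂ * a₃ ≠ 0 ∧
      (a₂ * a₃ - b₁ ^ 2) * (a₁ * a₃ - b₂ ^ 2) * (a₁ * a₂ - b₃ ^ 2) ≠ 0 ∧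
      (cianiMatrix a₁ a₂ a₃ b₁ b₂ b₃).det ≠ 0 := by
  set m := cianiMatrix a₁ a₂ a₃ b₁ b₂ b₃
  have hdiag (i : Fin 3) : m i i ≠ 0 := fun hi => by
    simpa using congrFun (h _ (isComplementary_single hi)) i
  have hminor (i j : Fin 3) (hij : i ≠ j) : m i i * m j j - m i j * m j i ≠ 0 := fun hm =>
    hdiag i (by simpa [hij.symm] using congrFun (h _ (isComplementary_of_minor_eq_zero hij hm)) j)
  refine ⟨mul_ne_zero (mul_ne_zero (hdiag 0) (hdiag 1)) (hdiag 2), ?_, fun hD => ?_⟩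
  · refine mul_ne_zero (mul_ne_zero ?_ ?_) ?_
    · simpa [m, sq] using hminor 1 2 (by decide)
    · simpa [m, sq] using hminor 0 2 (by decide)
    · simpa [m, sq] using hminor 0 1 (by decide)
  · obtain ⟨v, hv0, hv⟩ := exists_mulVec_eq_zero_iff.2 hD
    exact hv0 (h v (isComplementary_of_mulVec_eq_zero hv))

end Field

/-- Over an algebraically closed field of characteristic `≠ 2`, the Ciani quartic
`Q_m = 0` is nonsingular (the partial derivatives of `Q_m` have `(0,0,0)` as only
common zero) if and only if `a₁a₂a₃ ≠ 0`, `c₁c₂c₃ ≠ 0` and `det m ≠ 0`, where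
`cᵢ = aⱼaₖ − bᵢ²` and `m = [[a₁,b₃,b₂],[b₃,a₂,b₁],[b₂,b₁,a₃]]`. -/
theorem stmt_5 {K : Type*} [Field K] [IsAlgClosed K] (hchar : (2 : K) ≠ 0)
    (a₁ a₂ a₃ b₁ b₂ b₃ : K) :
    (∀ x : Fin 3 → K,
        (∀ i : Fin 3, eval x (pderiv i (cianiForm a₁ a₂ a₃ b₁ b₂ b₃)) = 0) → x = 0)
      ↔ (a₁ * a₂ * a₃ ≠ 0 ∧
          (a₂ * a₃ - b₁ ^ 2) * (a₁ * a₃ - b₂ ^ 2) * (a₁ * a₂ - b₃ ^ 2) ≠ 0 ∧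
          (!![a₁, b₃, b₂; b₃, a₂, b₁; b₂, b₁, a₃] : Matrix (Fin 3) (Fin 3) K).det ≠ 0) := by
  simp only [forall_eval_pderiv_cianiForm_eq_zero_iff hchar, forall_mul_mulVec_sq_iff]
  exact ⟨cianiMatrix_minors_ne_zero,
    fun ⟨hA, hC, hD⟩ _ => eq_zero_of_isComplementary_cianiMatrix hA hC hD⟩
end

section
/- Let K be a field and for M ∈ GL₃(K) let Cof M denote its cofactor matrix (the transpose of the adjugate), so that M·(Cof M)ᵀ = (det M)·1₃. Then: (1) Cof : GL₃(K) → GL₃(K) is a group homomorphism; (2) Cof M = 1₃ if and only if M = 1₃ or M = −1₃; more generally Cof M = Cof M′ iff M′ = ±M; (3) the image of Cof is exactly G^{×2}(K) = {N ∈ GL₃(K) : det N is a square in K}. In other words, there is an exact sequence 1 → {±1} → GL₃(K) → G^{×2}(K) → 1 induced by M ↦ Cof M. -/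
open Matrix

/-- The cofactor matrix of a `3 × 3` matrix: the transpose of the adjugate,
so that `M·(Cof M)ᵀ = (det M)·1₃`. -/
def Cof {K : Type*} [Field K] (M : Matrix (Fin 3) (Fin 3) K) :
    Matrix (Fin 3) (Fin 3) K :=
  (Matrix.adjugate M)ᵀ

/-!
Everything follows from three identities for `3 × 3` matrices: `Cof` is multiplicative,
`det (Cof M) = (det M)²` and `Cof (Cof M) = (det M) • M`.
If `Cof M = 1` then `(det M)² = 1` and `(det M) • M = 1`, so `M = ±1`; multiplicativity turns
`Cof M = Cof M'` into `Cof (M⁻¹ * M') = 1`. A matrix `N` with `det N = d²`, `d ≠ 0`, is the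
cofactor matrix of `d⁻¹ • Cof N`, since `Cof` is homogeneous of degree `2`.
-/

section Cofactor

variable {K : Type*} [Field K]

theorem cof_mul (M N : Matrix (Fin 3) (Fin 3) K) : Cof (M * N) = Cof M * Cof N := by
  simp only [Cof, adjugate_mul_distrib, transpose_mul]

theorem cof_one : Cof (1 : Matrix (Fin 3) (Fin 3) K) = 1 := by
  simp [Cof]

theorem cof_smul (c : K) (M : Matrix (Fin 3) (Fin 3) K) : Cof (c • M) = c ^ 2 • Cof M := by
  simp [Cof, adjugate_smul]

theorem cof_neg (M : Matrix (Fin 3) (Fin 3) K) : Cof (-M) = Cof M := by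
  rw [← neg_one_smul K M, cof_smul]
  simp

theorem det_cof (M : Matrix (Fin 3) (Fin 3) K) : (Cof M).det = M.det ^ 2 := by
  simp [Cof, det_adjugate]

theorem cof_cof (M : Matrix (Fin 3) (Fin 3) K) : Cof (Cof M) = M.det • M := by
  simp [Cof, ← adjugate_transpose, adjugate_adjugate]

theorem cof_eq_one_iff (M : Matrix (Fin 3) (Fin 3) K) : Cof M = 1 ↔ M = 1 ∨ M = -1 := by
  refine ⟨fun hM => ?_, by rintro (rfl | rfl) <;> simp only [cof_neg, cof_one]⟩
  have hdet : M.det ^ 2 = 1 := by rw [← det_cof, hM, det_one]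
  have hscalar : M.det • M = 1 := by rw [← cof_cof, hM, cof_one]
  rcases sq_eq_one_iff.mp hdet with h | h
  · left
    rwa [h, one_smul] at hscalar
  · right
    rw [h, neg_one_smul] at hscalar
    rw [← hscalar, neg_neg]

theorem cof_eq_cof_iff {M : Matrix (Fin 3) (Fin 3) K} (hM : IsUnit M.det)
    (M' : Matrix (Fin 3) (Fin 3) K) : Cof M = Cof M' ↔ M' = M ∨ M' = -M := by
  refine ⟨fun h => ?_, by rintro (rfl | rfl) <;> simp only [cof_neg]⟩
  have hquot : Cof (M⁻¹ * M') = 1 := by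
    rw [cof_mul, ← h, ← cof_mul, nonsing_inv_mul M hM, cof_one]
  have hM' : M' = M * (M⁻¹ * M') := by rw [← mul_assoc, mul_nonsing_inv M hM, one_mul]
  rcases (cof_eq_one_iff _).mp hquot with h1 | h1
  · left
    rw [hM', h1, mul_one]
  · right
    rw [hM', h1, mul_neg, mul_one]

theorem exists_cof_eq_iff {N : Matrix (Fin 3) (Fin 3) K} (hN : IsUnit N.det) :
    (∃ M : Matrix (Fin 3) (Fin 3) K, IsUnit M.det ∧ Cof M = N) ↔ ∃ d : K, N.det = d ^ 2 := by
  refine ⟨fun ⟨M, _, hM⟩ => ⟨M.det, hM ▸ det_cof M⟩, fun ⟨d, hd⟩ => ?_⟩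
  have hd0 : d ≠ 0 := by
    rintro rfl
    simp [hd] at hN
  refine ⟨d⁻¹ • Cof N, ?_, ?_⟩
  · rw [det_smul, det_cof, hd, Fintype.card_fin]
    exact isUnit_iff_ne_zero.mpr (by simp [hd0])
  · rw [cof_smul, cof_cof, hd, smul_smul, inv_pow, inv_mul_cancel₀ (pow_ne_zero 2 hd0), one_smul]

end Cofactor

/-- The map `M ↦ Cof M` induces an exact sequence
`1 → {±1} → GL₃(K) → G^{×2}(K) → 1`:
(1) `Cof` is multiplicative on invertible matrices;
(2) its kernel is `{±1₃}`, and more generally `Cof M = Cof M'` iff `M' = ±M`;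
(3) its image is exactly the set of invertible matrices whose determinant is a square. -/
theorem stmt_6 {K : Type*} [Field K] :
    (∀ M N : Matrix (Fin 3) (Fin 3) K, IsUnit M.det → IsUnit N.det →
      Cof (M * N) = Cof M * Cof N)
    ∧
    (∀ M : Matrix (Fin 3) (Fin 3) K, IsUnit M.det →
      (Cof M = 1 ↔ M = 1 ∨ M = -1))
    ∧
    (∀ M M' : Matrix (Fin 3) (Fin 3) K, IsUnit M.det → IsUnit M'.det →
      (Cof M = Cof M' ↔ M' = M ∨ M' = -M))
    ∧
    (∀ N : Matrix (Fin 3) (Fin 3) K, IsUnit N.det →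
      ((∃ M : Matrix (Fin 3) (Fin 3) K, IsUnit M.det ∧ Cof M = N) ↔
        ∃ d : K, N.det = d ^ 2)) :=
  ⟨fun M N _ _ => cof_mul M N, fun M _ => cof_eq_one_iff M,
    fun _ M' hM _ => cof_eq_cof_iff hM M', fun _ hN => exists_cof_eq_iff hN⟩
end

section
/- Let Ω₁, Ω₂ be g×g complex matrices with Ω₂ invertible, set Ω = [Ω₁ Ω₂] (a g×2g matrix) and τ = Ω₂⁻¹·Ω₁, and let J = [[0, 1_g], [−1_g, 0]]. Then the following are equivalent: (1) Ω satisfies the Riemann conditions, i.e. Ω·J·Ωᵀ = 0, the matrix Ω̄·J⁻¹·Ωᵀ is invertible, and 2i·(Ω̄·J⁻¹·Ωᵀ)⁻¹ is a Hermitian positive definite matrix (Ω̄ denoting the entrywise complex conjugate of Ω); (2) τ is symmetric and the imaginary part of τ is positive definite (i.e. τ belongs to the Siegel upper half-space ℍ_g). -/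
/-!
Write `Ω₁ = Ω₂ τ`. A block computation gives `Ω J Ωᵀ = Ω₂ (τ - τᵀ) Ω₂ᵀ`, so the first Riemann
condition says exactly that `τ` is symmetric. For symmetric `τ`, the same computation gives
`Ω̄ J⁻¹ Ωᵀ = 2i · (Ω₂ᵀ)ᴴ (Im τ) Ω₂ᵀ`, so `2i (Ω̄ J⁻¹ Ωᵀ)⁻¹` is congruent to `(Im τ)⁻¹` and is
positive definite iff `Im τ` is; the invertibility condition then comes for free.
-/

open Matrix ComplexOrder

namespace Matrix

section CommRing

variable {R : Type*} [CommRing R] {m n : Type*} [Fintype n] [DecidableEq n]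

theorem fromCols_mul_fromBlocks_mul_transpose_fromCols (P Q : Matrix m n R) (S T : Matrix n n R) :
    fromCols (P * S) P * (fromBlocks 0 1 (-1) 0 : Matrix (n ⊕ n) (n ⊕ n) R) *
        (fromCols (Q * T) Q)ᵀ = P * (S - Tᵀ) * Qᵀ := by
  rw [fromCols_mul_fromBlocks, transpose_fromCols, fromCols_mul_fromRows, transpose_mul]
  simp [Matrix.mul_add, Matrix.add_mul, Matrix.mul_assoc, sub_eq_neg_add]

theorem inv_fromBlocks_zero_one_neg_one_zero :
    (fromBlocks 0 1 (-1) 0 : Matrix (n ⊕ n) (n ⊕ n) R)⁻¹ = -fromBlocks 0 1 (-1) 0 := by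
  refine inv_eq_right_inv ?_
  simp [fromBlocks_neg, fromBlocks_multiply, fromBlocks_one]

end CommRing

section Field

variable {K : Type*} [Field K] {n : Type*} [Fintype n] [DecidableEq n]

theorem inv_smul_of_ne_zero {c : K} (hc : c ≠ 0) (A : Matrix n n K) :
    (c • A)⁻¹ = c⁻¹ • A⁻¹ := by
  by_cases hA : IsUnit A.det
  · exact inv_smul' _ (Units.mk0 c hc) hA
  · have hcA : ¬IsUnit (c • A).det := by
      simpa [det_smul, hc] using hA
    rw [nonsing_inv_apply_not_isUnit _ hA, nonsing_inv_apply_not_isUnit _ hcA, smul_zero]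

theorem isUnit_det_of_posDef_smul_inv [PartialOrder K] [StarRing K] {c : K} {A : Matrix n n K}
    (h : (c • A⁻¹).PosDef) : IsUnit A.det := by
  have := (isUnit_iff_isUnit_det _).mp h.isUnit
  rw [det_smul, IsUnit.mul_iff, isUnit_nonsing_inv_det_iff] at this
  exact this.2

end Field

section Complex

theorem sub_map_conj_eq_smul_map_im {m n : Type*} (A : Matrix m n ℂ) :
    A - A.map (starRingEnd ℂ) = (2 * Complex.I) • (A.map Complex.im).map Complex.ofReal := by
  ext i j
  simp only [sub_apply, map_apply, smul_apply, smul_eq_mul, Complex.sub_conj]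
  push_cast
  ring

variable {n : Type*} [Fintype n]

theorem re_star_dotProduct_map_ofReal_mulVec (N : Matrix n n ℝ) (x : n → ℂ) :
    (star x ⬝ᵥ N.map Complex.ofReal *ᵥ x).re =
      (fun i ↦ (x i).re) ⬝ᵥ N *ᵥ (fun i ↦ (x i).re) +
        (fun i ↦ (x i).im) ⬝ᵥ N *ᵥ (fun i ↦ (x i).im) := by
  simp only [dotProduct, mulVec, Finset.mul_sum, ← Finset.sum_add_distrib, Complex.re_sum]
  refine Finset.sum_congr rfl fun i _ ↦ Finset.sum_congr rfl fun j _ ↦ ?_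
  simp

theorem posDef_map_ofReal_iff {N : Matrix n n ℝ} : (N.map Complex.ofReal).PosDef ↔ N.PosDef := by
  have hHerm : (N.map Complex.ofReal).IsHermitian ↔ N.IsHermitian := by
    simp only [IsHermitian, conjTranspose, ← Matrix.ext_iff]
    simp
  rw [posDef_iff_dotProduct_mulVec, posDef_iff_dotProduct_mulVec, hHerm]
  refine and_congr_right fun hN ↦ ⟨fun h x hx ↦ ?_, fun h x hx ↦ ?_⟩
  · have hx' : (fun i ↦ (x i : ℂ)) ≠ 0 := fun h0 ↦ hx <| funext fun i ↦ by
      simpa using congrFun h0 i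
    have := (Complex.pos_iff.mp (h hx')).1
    simpa [re_star_dotProduct_map_ofReal_mulVec] using this
  · have hnonneg (v : n → ℝ) : 0 ≤ v ⬝ᵥ N *ᵥ v := by
      rcases eq_or_ne v 0 with rfl | hv
      · simp
      · simpa using (h hv).le
    refine Complex.pos_iff.mpr ⟨?_, ((hHerm.mpr hN).im_star_dotProduct_mulVec_self x).symm⟩
    rw [re_star_dotProduct_map_ofReal_mulVec]
    have hreim : (fun i ↦ (x i).re) ≠ 0 ∨ (fun i ↦ (x i).im) ≠ 0 := by
      by_contra! h0
      exact hx <| funext fun i ↦ Complex.ext (congrFun h0.1 i) (congrFun h0.2 i)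
    rcases hreim with hre | him
    · exact add_pos_of_pos_of_nonneg (by simpa using h hre) (hnonneg _)
    · exact add_pos_of_nonneg_of_pos (hnonneg _) (by simpa using h him)

end Complex

end Matrix

/-- Riemann conditions: for `Ω = [Ω₁ Ω₂]` with `Ω₂` invertible and `τ = Ω₂⁻¹·Ω₁`,
the conditions `Ω·J·Ωᵀ = 0`, `Ω̄·J⁻¹·Ωᵀ` invertible and `2i·(Ω̄·J⁻¹·Ωᵀ)⁻¹` Hermitian
positive definite are together equivalent to: `τ` is symmetric with positive
definite imaginary part (i.e. `τ ∈ ℍ_g`). -/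
theorem stmt_13 {g : ℕ} (Ω₁ Ω₂ : Matrix (Fin g) (Fin g) ℂ) (hΩ₂ : IsUnit Ω₂.det)
    (J : Matrix (Fin g ⊕ Fin g) (Fin g ⊕ Fin g) ℂ) (hJ : J = fromBlocks 0 1 (-1) 0)
    (Ω : Matrix (Fin g) (Fin g ⊕ Fin g) ℂ) (hΩ : Ω = fromCols Ω₁ Ω₂)
    (τ : Matrix (Fin g) (Fin g) ℂ) (hτ : τ = Ω₂⁻¹ * Ω₁) :
    (Ω * J * Ωᵀ = 0 ∧ IsUnit (Ω.map (starRingEnd ℂ) * J⁻¹ * Ωᵀ).det ∧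
        ((2 * Complex.I) • (Ω.map (starRingEnd ℂ) * J⁻¹ * Ωᵀ)⁻¹).PosDef)
      ↔ (τ.IsSymm ∧ (τ.map Complex.im).PosDef) := by
  have hΩ₁ : Ω₁ = Ω₂ * τ := by rw [hτ, ← Matrix.mul_assoc, mul_nonsing_inv _ hΩ₂, Matrix.one_mul]
  have hΩ₂' : IsUnit Ω₂ := (isUnit_iff_isUnit_det _).mpr hΩ₂
  have hΩ₂T : IsUnit Ω₂ᵀ := (isUnit_iff_isUnit_det _).mpr (by rwa [det_transpose])
  have h2I : 2 * Complex.I ≠ 0 := by simp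
  have hsymm : Ω * J * Ωᵀ = 0 ↔ τ.IsSymm := by
    rw [hJ, hΩ, hΩ₁, fromCols_mul_fromBlocks_mul_transpose_fromCols, hΩ₂T.mul_left_eq_zero,
      hΩ₂'.mul_right_eq_zero, sub_eq_zero, IsSymm, eq_comm]
  have hM (hs : τ.IsSymm) : Ω.map (starRingEnd ℂ) * J⁻¹ * Ωᵀ
      = (2 * Complex.I) • (star Ω₂ᵀ * (τ.map Complex.im).map Complex.ofReal * Ω₂ᵀ) := by
    rw [hJ, hΩ, hΩ₁, fromCols_map, Matrix.map_mul, inv_fromBlocks_zero_one_neg_one_zero,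
      Matrix.mul_neg, Matrix.neg_mul, fromCols_mul_fromBlocks_mul_transpose_fromCols, hs.eq,
      ← Matrix.smul_mul, ← Matrix.mul_smul, ← sub_map_conj_eq_smul_map_im, ← neg_sub,
      Matrix.mul_neg, Matrix.neg_mul, neg_neg, star_eq_conjTranspose, transpose_conjTranspose]
    rfl
  have hposDef (hs : τ.IsSymm) :
      ((2 * Complex.I) • (Ω.map (starRingEnd ℂ) * J⁻¹ * Ωᵀ)⁻¹).PosDef
        ↔ (τ.map Complex.im).PosDef := by
    rw [hM hs, inv_smul_of_ne_zero h2I, smul_smul, mul_inv_cancel₀ h2I, one_smul, posDef_inv_iff,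
      hΩ₂T.posDef_star_left_conjugate_iff, posDef_map_ofReal_iff]
  constructor
  · rintro ⟨h0, -, hpos⟩
    have hs := hsymm.mp h0
    exact ⟨hs, (hposDef hs).mp hpos⟩
  · rintro ⟨hs, hpos⟩
    have hpos' := (hposDef hs).mpr hpos
    exact ⟨hsymm.mpr hs, isUnit_det_of_posDef_smul_inv hpos', hpos'⟩
end
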